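/- arXiv:2301.08384 — 2 statements merged into one kernel-verified Lean document; each statement's English description precedes it below -/
import Mathlib

section
/- Let γ : [0,L] → ℝ² be a well-periodic arclength parameterized planar curve with signed curvature k. If there are three points 0 ≤ s₁ < s₂ < s₃ ≤ L such that k(s₁) = k(s₂) = k(s₃) = 0 and k(s) ≠ 0 for all s ∈ (s₁,s₂) ∪ (s₂,s₃), then: (a) γ'(s₁ + σ) = γ'(s₃ + σ) whenever both s₁ + σ and s₃ + σ lie in [0,L]; and (b) k(σ + s₁) = −k(s₃ − σ) whenever both σ + s₁ and s₃ − σ lie in [0,L]. -/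
open MeasureTheory Set Filter RealInnerProductSpace

noncomputable section

/-- The Euclidean plane. -/
abbrev R2 := EuclideanSpace ℝ (Fin 2)

/-- The point of the plane with coordinates `(a, b)`. -/
def e2 (a b : ℝ) : R2 := (WithLp.equiv 2 (Fin 2 → ℝ)).symm ![a, b]

/-- Counterclockwise rotation by `π/2`. -/
def rot (v : R2) : R2 := e2 (-(v 1)) (v 0)

/-- The signed curvature of an arclength parameterized planar curve `γ`, defined via
`γ'' = k • R γ'`, i.e. `k = ⟪γ'', R γ'⟫` (meaningful a.e. for `W^{2,p}` curves, and
everywhere for `C²` curves). -/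
def curvOf (γ : ℝ → R2) (s : ℝ) : ℝ := ⟪deriv (deriv γ) s, rot (deriv γ s)⟫

/-- `γ` (restricted to `[0,L]`) is an arclength parameterized `W^{2,p}` planar curve:
`γ` is `C¹` and unit-speed on `[0,L]`, `γ'` is absolutely continuous (it is recovered from
its a.e. derivative by integration), and the second derivative lies in `L^p(0,L)`. -/
structure ArcCurve (p L : ℝ) (γ : ℝ → R2) : Prop where
  c1 : ContDiffOn ℝ 1 γ (Icc 0 L)
  unit : ∀ s ∈ Icc (0:ℝ) L, ‖deriv γ s‖ = 1
  ac : ∀ a ∈ Icc (0:ℝ) L, ∀ b ∈ Icc (0:ℝ) L,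
    deriv γ b - deriv γ a = ∫ s in a..b, deriv (deriv γ) s
  lp : MemLp (fun s => deriv (deriv γ) s) (ENNReal.ofReal p) (volume.restrict (Icc 0 L))

/-- The `W^{2,p}`-distance between two curves on `[0,L]`. -/
def W2Dist (p L : ℝ) (γ ξ : ℝ → R2) : ℝ :=
  (∫ s in Icc (0:ℝ) L, (‖γ s - ξ s‖ ^ p + ‖deriv γ s - deriv ξ s‖ ^ p +
    ‖deriv (deriv γ) s - deriv (deriv ξ) s‖ ^ p)) ^ (1 / p)

/-- The energy `F(γ) = ∫₀^L f(|k|) ds`. -/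
def En (f : ℝ → ℝ) (L : ℝ) (γ : ℝ → R2) : ℝ := ∫ s in Icc (0:ℝ) L, f |curvOf γ s|

/-- The admissible class `A_c` with clamped boundary conditions. -/
def AdmC (p L : ℝ) (P0 P1 V0 V1 : R2) (γ : ℝ → R2) : Prop :=
  ArcCurve p L γ ∧ γ 0 = P0 ∧ γ L = P1 ∧ deriv γ 0 = V0 ∧ deriv γ L = V1

/-- Global minimizer of `F` in `A_c`. -/
def IsGlobalMinC (f : ℝ → ℝ) (p L : ℝ) (P0 P1 V0 V1 : R2) (γ : ℝ → R2) : Prop :=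
  AdmC p L P0 P1 V0 V1 γ ∧ ∀ ξ, AdmC p L P0 P1 V0 V1 ξ → En f L γ ≤ En f L ξ

/-- Local minimizer of `F` in `A_c` (w.r.t. the `W^{2,p}` topology). -/
def IsLocalMinC (f : ℝ → ℝ) (p L : ℝ) (P0 P1 V0 V1 : R2) (γ : ℝ → R2) : Prop :=
  AdmC p L P0 P1 V0 V1 γ ∧
    ∃ δ > 0, ∀ ξ, AdmC p L P0 P1 V0 V1 ξ → W2Dist p L γ ξ < δ → En f L γ ≤ En f L ξ

/-- The admissible class `A_pin` with pinned boundary conditions. -/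
def AdmP (p L : ℝ) (P0 P1 : R2) (γ : ℝ → R2) : Prop :=
  ArcCurve p L γ ∧ γ 0 = P0 ∧ γ L = P1

/-- Local minimizer of `F` in `A_pin` (w.r.t. the `W^{2,p}` topology). -/
def IsLocalMinP (f : ℝ → ℝ) (p L : ℝ) (P0 P1 : R2) (γ : ℝ → R2) : Prop :=
  AdmP p L P0 P1 γ ∧
    ∃ δ > 0, ∀ ξ, AdmP p L P0 P1 ξ → W2Dist p L γ ξ < δ → En f L γ ≤ En f L ξ

/-- `k` (the curvature of a curve on `[0,L]`) is well-periodic with antiperiod `T`: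
`k` is continuous on `[0,L]` and `k(s) = Φ(s - s₀)` for a continuous odd function `Φ`
which is antiperiodic with antiperiod `T > 0` and whose zero set is exactly `Tℤ`. -/
def WellPeriodicWith (L : ℝ) (k : ℝ → ℝ) (T : ℝ) : Prop :=
  ContinuousOn k (Icc 0 L) ∧ 0 < T ∧
  ∃ (s₀ : ℝ) (Φ : ℝ → ℝ), Continuous Φ ∧ (∀ x, Φ (-x) = -Φ x) ∧ (∀ x, Φ (x + T) = -Φ x) ∧
    (∀ x : ℝ, Φ x = 0 ↔ ∃ n : ℤ, x = n * T) ∧ (∀ s ∈ Icc (0:ℝ) L, k s = Φ (s - s₀))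

/-- Well-periodic curvature (with some antiperiod). -/
def WellPeriodic (L : ℝ) (k : ℝ → ℝ) : Prop := ∃ T, WellPeriodicWith L k T

/-- `(m/2)`-fold well-periodic curvature: well-periodic with `k(0) = 0` and antiperiod `L/m`. -/
def MFold (L : ℝ) (m : ℕ) (k : ℝ → ℝ) : Prop := k 0 = 0 ∧ WellPeriodicWith L k (L / m)

/-!
The zeros of `k` are exactly `s₀ + Tℤ`, so consecutive zeros are `T` apart and `s₃ = s₁ + 2T`.
Since `Φ` is odd and `2T`-periodic, `k` is `2T`-periodic and point-symmetric about each of its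
zeros; symmetry about `s₂` is (b). The tangent solves the linear equation `v' = k R v`, whose
solutions have constant norm because `R v ⊥ v`, so two solutions that agree at one point agree
everywhere. Comparing `γ'` with `s ↦ γ'(2s₂ - s)`, which agree at `s₂`, gives `γ'(s₁) = γ'(s₃)`;
comparing `γ'` with `s ↦ γ'(s + 2T)`, which then agree at `s₁`, gives (a).
-/

lemma rot_sub (x y : R2) : rot (x - y) = rot x - rot y := by
  ext i; fin_cases i <;> simp [rot, e2, neg_add_eq_sub]

lemma inner_rot_self (x : R2) : ⟪x, rot x⟫ = 0 := by
  simp [rot, e2, PiLp.inner_apply, Fin.sum_univ_two, mul_comm]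

def HasTurningRateOn (u : ℝ → R2) (c : ℝ → ℝ) (s : Set ℝ) : Prop :=
  ∀ x ∈ s, HasDerivAt u (c x • rot (u x)) x

namespace HasTurningRateOn

variable {u v : ℝ → R2} {c : ℝ → ℝ} {a b : ℝ}

lemma mono {s t : Set ℝ} (hu : HasTurningRateOn u c s) (hts : t ⊆ s) : HasTurningRateOn u c t :=
  fun x hx => hu x (hts hx)

lemma sub {s : Set ℝ} (hu : HasTurningRateOn u c s) (hv : HasTurningRateOn v c s) :
    HasTurningRateOn (u - v) c s := fun x hx => by
  simpa only [Pi.sub_apply, rot_sub, smul_sub] using (hu x hx).sub (hv x hx)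

lemma norm_eq (hu : HasTurningRateOn u c (Icc a b)) {x y : ℝ} (hx : x ∈ Icc a b)
    (hy : y ∈ Icc a b) : ‖u x‖ = ‖u y‖ := by
  have hderiv : ∀ z ∈ Icc a b, HasDerivAt (‖u ·‖ ^ 2) 0 z := fun z hz => by
    simpa only [inner_smul_right, inner_rot_self, mul_zero] using (hu z hz).norm_sq
  have hconst := constant_of_has_deriv_right_zero
    (fun z hz => (hderiv z hz).continuousAt.continuousWithinAt)
    (fun z hz => (hderiv z (Ico_subset_Icc_self hz)).hasDerivWithinAt)
  have := (hconst x hx).trans (hconst y hy).symm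
  rwa [sq_eq_sq₀ (norm_nonneg _) (norm_nonneg _)] at this

lemma eqOn (hu : HasTurningRateOn u c (Icc a b)) (hv : HasTurningRateOn v c (Icc a b))
    {t : ℝ} (ht : t ∈ Icc a b) (hut : u t = v t) : EqOn u v (Icc a b) := fun x hx => by
  have := (hu.sub hv).norm_eq hx ht
  rwa [Pi.sub_apply, Pi.sub_apply, hut, sub_self, norm_zero, norm_eq_zero, sub_eq_zero] at this

lemma comp_reflect_eq (hu : HasTurningRateOn u c (Icc a b))
    (hc : ∀ x ∈ Icc a b, c (a + b - x) = -c x) {x : ℝ} (hx : x ∈ Icc a b) :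
    u (a + b - x) = u x := by
  have hrefl : ∀ y ∈ Icc a b, a + b - y ∈ Icc a b :=
    fun y hy => ⟨by linarith [hy.2], by linarith [hy.1]⟩
  have hw : HasTurningRateOn (fun y => u (a + b - y)) c (Icc a b) := fun y hy => by
    simpa [hc y hy] using (hu _ (hrefl y hy)).comp_const_sub (a + b) y
  exact (hw.eqOn hu (t := (a + b) / 2) ⟨by linarith [hx.1, hx.2], by linarith [hx.1, hx.2]⟩
    (by ring_nf)) hx

lemma comp_add_eq (hu : HasTurningRateOn u c (Icc a b)) {p : ℝ} (hp : 0 ≤ p)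
    (hc : ∀ x ∈ Icc a (b - p), c (x + p) = c x) {t : ℝ} (ht : t ∈ Icc a (b - p))
    (hut : u (t + p) = u t) {x : ℝ} (hx : x ∈ Icc a (b - p)) : u (x + p) = u x := by
  have hw : HasTurningRateOn (fun y => u (y + p)) c (Icc a (b - p)) := fun y hy => by
    simpa [hc y hy] using (hu _ ⟨by linarith [hy.1], by linarith [hy.2]⟩).comp_add_const y p
  exact hw.eqOn (hu.mono (Icc_subset_Icc le_rfl (by linarith))) ht hut hx

end HasTurningRateOn

lemma Function.Antiperiodic.two_mul_int_mul_sub_eq {Φ : ℝ → ℝ} {T : ℝ}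
    (hanti : Function.Antiperiodic Φ T) (hodd : Function.Odd Φ) (n : ℤ) (x : ℝ) :
    Φ (2 * (n * T) - x) = -Φ x := by
  rw [← hodd x, ← hanti.periodic_two_mul.int_mul_sub_eq n, mul_left_comm]

section WellPeriodic

variable {L T s₀ : ℝ} {Φ k : ℝ → ℝ}

lemma eq_add_of_consecutive_zeros (hT : 0 < T) (hzero : ∀ x, Φ x = 0 ↔ ∃ n : ℤ, x = n * T)
    (hkΦ : ∀ s ∈ Icc 0 L, k s = Φ (s - s₀)) {x y : ℝ} (hx : 0 ≤ x) (hxy : x < y) (hy : y ≤ L)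
    (hkx : k x = 0) (hky : k y = 0) (hgap : ∀ s ∈ Ioo x y, k s ≠ 0) : y = x + T := by
  obtain ⟨m, hm⟩ := (hzero _).1 (hkΦ x ⟨hx, by linarith⟩ ▸ hkx)
  obtain ⟨n, hn⟩ := (hzero _).1 (hkΦ y ⟨by linarith, hy⟩ ▸ hky)
  have hmn : (m : ℝ) < n := lt_of_mul_lt_mul_right (by linarith) hT.le
  by_contra hne
  have hnext : (m : ℝ) + 2 ≤ n := by
    have hmn' : m < n := by exact_mod_cast hmn
    have : m + 1 ≠ n := fun h => hne (by rw [← h] at hn; push_cast at hn; linarith)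
    exact_mod_cast (show m + 2 ≤ n by omega)
  refine hgap (x + T) ⟨by linarith, by nlinarith⟩ ?_
  rw [hkΦ _ ⟨by linarith, by nlinarith⟩, hzero]
  exact ⟨m + 1, by push_cast; linarith⟩

lemma apply_two_mul_sub_eq_neg_of_zero (hanti : Function.Antiperiodic Φ T) (hodd : Function.Odd Φ)
    (hzero : ∀ x, Φ x = 0 ↔ ∃ n : ℤ, x = n * T) (hkΦ : ∀ s ∈ Icc 0 L, k s = Φ (s - s₀))
    {c : ℝ} (hc : c ∈ Icc 0 L) (hkc : k c = 0) {t : ℝ} (ht : t ∈ Icc 0 L)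
    (ht' : 2 * c - t ∈ Icc 0 L) : k (2 * c - t) = -k t := by
  obtain ⟨n, hn⟩ := (hzero _).1 (hkΦ c hc ▸ hkc)
  rw [hkΦ _ ht, hkΦ _ ht', ← hanti.two_mul_int_mul_sub_eq hodd n, ← hn]
  ring_nf

lemma apply_add_two_mul_eq (hanti : Function.Antiperiodic Φ T)
    (hkΦ : ∀ s ∈ Icc 0 L, k s = Φ (s - s₀)) {t : ℝ} (ht : t ∈ Icc 0 L)
    (ht' : t + 2 * T ∈ Icc 0 L) : k (t + 2 * T) = k t := by
  rw [hkΦ _ ht, hkΦ _ ht', ← hanti.periodic_two_mul (t - s₀)]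
  ring_nf

end WellPeriodic

theorem wellPeriodic_symmetry_general (L : ℝ) (γ : ℝ → R2) (k : ℝ → ℝ)
    (hcurv : ∀ s ∈ Icc (0:ℝ) L, HasDerivAt (deriv γ) (k s • rot (deriv γ s)) s)
    (s₀ T : ℝ) (Φ : ℝ → ℝ) (hT : 0 < T)
    (hodd : ∀ x, Φ (-x) = -Φ x) (hanti : ∀ x, Φ (x + T) = -Φ x)
    (hzero : ∀ x : ℝ, Φ x = 0 ↔ ∃ n : ℤ, x = n * T)
    (hkΦ : ∀ s ∈ Icc (0:ℝ) L, k s = Φ (s - s₀))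
    (s₁ s₂ s₃ : ℝ) (hs₁0 : 0 ≤ s₁) (hs₁₂ : s₁ < s₂) (hs₂₃ : s₂ < s₃) (hs₃L : s₃ ≤ L)
    (hz : k s₁ = 0 ∧ k s₂ = 0 ∧ k s₃ = 0)
    (hnz : ∀ s, s ∈ Ioo s₁ s₂ ∪ Ioo s₂ s₃ → k s ≠ 0) :
    (∀ σ : ℝ, s₁ + σ ∈ Icc (0:ℝ) L → s₃ + σ ∈ Icc (0:ℝ) L →
      deriv γ (s₁ + σ) = deriv γ (s₃ + σ)) ∧
    (∀ σ : ℝ, σ + s₁ ∈ Icc (0:ℝ) L → s₃ - σ ∈ Icc (0:ℝ) L →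
      k (σ + s₁) = -(k (s₃ - σ))) := by
  obtain ⟨hk₁, hk₂, hk₃⟩ := hz
  have hs₂ : s₂ = s₁ + T := eq_add_of_consecutive_zeros hT hzero hkΦ hs₁0 hs₁₂ (by linarith)
    hk₁ hk₂ fun s hs => hnz s (.inl hs)
  have hs₃ : s₃ = s₂ + T := eq_add_of_consecutive_zeros hT hzero hkΦ (by linarith) hs₂₃ hs₃L
    hk₂ hk₃ fun s hs => hnz s (.inr hs)
  have hsymm : ∀ t ∈ Icc 0 L, 2 * s₂ - t ∈ Icc 0 L → k (2 * s₂ - t) = -k t :=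
    fun t => apply_two_mul_sub_eq_neg_of_zero hanti hodd hzero hkΦ ⟨by linarith, by linarith⟩ hk₂
  have hsub : Icc s₁ s₃ ⊆ Icc 0 L := Icc_subset_Icc hs₁0 hs₃L
  have hends : deriv γ s₃ = deriv γ s₁ := by
    have := (HasTurningRateOn.mono hcurv hsub).comp_reflect_eq
      (fun x hx => by
        rw [show s₁ + s₃ - x = 2 * s₂ - x by linarith]
        exact hsymm x (hsub hx) (hsub ⟨by linarith [hx.2], by linarith [hx.1]⟩))
      (left_mem_Icc.2 (by linarith))
    rwa [add_sub_cancel_left] at this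
  refine ⟨fun σ h₁ h₃ => ?_, fun σ h₁ h₃ => ?_⟩
  · have hσ : s₁ + σ ∈ Icc 0 (L - 2 * T) := ⟨h₁.1, by linarith [h₃.2]⟩
    have := HasTurningRateOn.comp_add_eq hcurv (by positivity)
      (fun x hx => apply_add_two_mul_eq hanti hkΦ ⟨hx.1, by linarith [hx.2]⟩
        ⟨by linarith [hx.1], by linarith [hx.2]⟩)
      (t := s₁) ⟨hs₁0, by linarith⟩ (by rw [← hends]; congr 1; linarith) hσ
    rw [← this]; congr 1; linarith
  · rw [← hsymm _ h₃ (by convert h₁ using 1; linarith)]; congr 1; linarith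

/-- Lemma: symmetry of well-periodic curves. -/
theorem wellPeriodic_symmetry (L : ℝ) (hL : 0 < L) (γ : ℝ → R2) (k : ℝ → ℝ)
    (hC1 : ContDiffOn ℝ 1 γ (Icc 0 L)) (hunit : ∀ s ∈ Icc (0:ℝ) L, ‖deriv γ s‖ = 1)
    (hcurv : ∀ s ∈ Icc (0:ℝ) L, HasDerivAt (deriv γ) (k s • rot (deriv γ s)) s)
    (s₀ T : ℝ) (Φ : ℝ → ℝ) (hT : 0 < T) (hΦcont : Continuous Φ)
    (hodd : ∀ x, Φ (-x) = -Φ x) (hanti : ∀ x, Φ (x + T) = -Φ x)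
    (hzero : ∀ x : ℝ, Φ x = 0 ↔ ∃ n : ℤ, x = n * T)
    (hkΦ : ∀ s ∈ Icc (0:ℝ) L, k s = Φ (s - s₀))
    (s₁ s₂ s₃ : ℝ) (hs₁0 : 0 ≤ s₁) (hs₁₂ : s₁ < s₂) (hs₂₃ : s₂ < s₃) (hs₃L : s₃ ≤ L)
    (hz : k s₁ = 0 ∧ k s₂ = 0 ∧ k s₃ = 0)
    (hnz : ∀ s, s ∈ Ioo s₁ s₂ ∪ Ioo s₂ s₃ → k s ≠ 0) :
    (∀ σ : ℝ, s₁ + σ ∈ Icc (0:ℝ) L → s₃ + σ ∈ Icc (0:ℝ) L →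
      deriv γ (s₁ + σ) = deriv γ (s₃ + σ)) ∧
    (∀ σ : ℝ, σ + s₁ ∈ Icc (0:ℝ) L → s₃ - σ ∈ Icc (0:ℝ) L →
      k (σ + s₁) = -(k (s₃ - σ))) :=
  wellPeriodic_symmetry_general L γ k hcurv s₀ T Φ hT hodd hanti hzero hkΦ s₁ s₂ s₃ hs₁0 hs₁₂ hs₂₃
    hs₃L hz hnz
end
end

section
/- Let γ = (x,y) : [0,L] → ℝ² be a (1/2)-fold well-periodic arclength parameterized curve. If γ(0) = (0,0) and γ(L) = (l,0) with some l ≠ 0, then x(L − s) + x(s) = l and y(L − s) = y(s) for all s ∈ [0,L]. -/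
open MeasureTheory Set Filter RealInnerProductSpace

noncomputable section

/-!
In complex notation the unit tangent `v = γ'` solves `v' = i k v`. Oddness and antiperiodicity
of `Φ`, together with `k 0 = 0`, make `k` symmetric about `L / 2`, so the reflected tangent
`w s = conj (v (L - s))` solves the same equation. Since `i k` is purely imaginary, `v · conj w`
is constant along two solutions, hence `v = c w` for a constant `c`. Both `v` and `w` integrate
to `γ L - γ 0 = l ≠ 0` over `[0, L]`, so `c = 1`; integrating `v s = conj (v (L - s))` once more
gives `γ s + conj (γ (L - s)) = l`.
-/

open Complex ComplexConjugate intervalIntegral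

theorem Function.Antiperiodic.sub_eq_of_odd {α β : Type*} [SubtractionCommMonoid α]
    [InvolutiveNeg β] {f : α → β} {c x : α} (h : Function.Antiperiodic f c)
    (hodd : Function.Odd f) : f (c - x) = f x := by
  rw [h.sub_eq', hodd, neg_neg]

theorem Function.Antiperiodic.sub_sub_int_mul_eq_of_odd {α β : Type*} [NonAssocRing α]
    [NonAssocRing β] {f : α → β} {c : α} (h : Function.Antiperiodic f c)
    (hodd : Function.Odd f) (n : ℤ) (x : α) : f (c - x - n * c) = f (x - n * c) := by
  rw [h.sub_int_mul_eq, h.sub_int_mul_eq, h.sub_eq_of_odd hodd]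

theorem comp_sub_eq_of_odd_of_antiperiodic {L s₀ : ℝ} {Φ k : ℝ → ℝ} (hk0 : k 0 = 0)
    (hodd : Function.Odd Φ) (hanti : Function.Antiperiodic Φ L)
    (hzero : ∀ x, Φ x = 0 → ∃ n : ℤ, x = n * L) (hL : 0 ≤ L)
    (hkΦ : ∀ s ∈ Icc 0 L, k s = Φ (s - s₀)) :
    ∀ s ∈ Icc 0 L, k (L - s) = k s := by
  obtain ⟨n, hn⟩ := hzero (0 - s₀) (by rw [← hkΦ 0 (left_mem_Icc.2 hL), hk0])
  intro s hs
  rw [hkΦ _ ⟨sub_nonneg.2 hs.2, sub_le_self L hs.1⟩, hkΦ s hs,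
    show s₀ = ((-n : ℤ) : ℝ) * L by push_cast; linarith]
  exact hanti.sub_sub_int_mul_eq_of_odd hodd (-n) s

theorem constant_of_hasDerivAt_zero {E : Type*} [NormedAddCommGroup E] [NormedSpace ℝ E]
    {f : ℝ → E} {a b : ℝ} (hf : ∀ x ∈ Icc a b, HasDerivAt f 0 x) :
    ∀ x ∈ Icc a b, f x = f a :=
  constant_of_has_deriv_right_zero (fun x hx => (hf x hx).continuousAt.continuousWithinAt)
    fun x hx => (hf x (Ico_subset_Icc_self hx)).hasDerivWithinAt

def toComplex : R2 ≃ₗᵢ[ℝ] ℂ := Complex.orthonormalBasisOneI.repr.symm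

@[simp] theorem toComplex_re (v : R2) : (toComplex v).re = v 0 := by simp [toComplex]
@[simp] theorem toComplex_im (v : R2) : (toComplex v).im = v 1 := by simp [toComplex]

theorem toComplex_rot (v : R2) : toComplex (rot v) = I * toComplex v := by
  apply Complex.ext <;> simp [rot, e2]

theorem toComplex_e2 (a b : ℝ) : toComplex (e2 a b) = a + b * I := by
  apply Complex.ext <;> simp [e2]

theorem HasDerivAt.toComplex {f : ℝ → R2} {f' : R2} {x : ℝ} (h : HasDerivAt f f' x) :
    HasDerivAt (fun t => _root_.toComplex (f t)) (_root_.toComplex f') x :=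
  (_root_.toComplex.toContinuousLinearEquiv : R2 →L[ℝ] ℂ).hasFDerivAt.comp_hasDerivAt x h

/-- The equation `γ'' = k • rot γ'` for the unit tangent, read in `ℂ` via `toComplex`. -/
def SolvesTangentEq (k : ℝ → ℝ) (S : Set ℝ) (f : ℝ → ℂ) : Prop :=
  ∀ s ∈ S, HasDerivAt f (k s * I * f s) s

namespace SolvesTangentEq

variable {k : ℝ → ℝ} {f g : ℝ → ℂ}

theorem continuousOn {S : Set ℝ} (hf : SolvesTangentEq k S f) : ContinuousOn f S :=
  fun s hs => (hf s hs).continuousAt.continuousWithinAt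

theorem mul_conj_eq {a b : ℝ} (hf : SolvesTangentEq k (Icc a b) f)
    (hg : SolvesTangentEq k (Icc a b) g) :
    ∀ s ∈ Icc a b, f s * conj (g s) = f a * conj (g a) := by
  refine constant_of_hasDerivAt_zero fun s hs => ?_
  refine ((hf s hs).mul (hg s hs).star).congr_deriv ?_
  simp only [star_mul', star_def, conj_ofReal, conj_I]
  ring

theorem mul_eq_mul {a b : ℝ} (hf : SolvesTangentEq k (Icc a b) f)
    (hg : SolvesTangentEq k (Icc a b) g) (hga : g a ≠ 0) :
    ∀ s ∈ Icc a b, f s * g a = f a * g s := by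
  intro s hs
  have hfg := hf.mul_conj_eq hg s hs
  have hgg := hg.mul_conj_eq hg s hs
  have hconj : conj (g a) ≠ 0 := (map_ne_zero _).mpr hga
  apply mul_right_cancel₀ hconj
  linear_combination g s * hfg - f s * hgg

theorem eqOn_of_integral_eq {a b : ℝ} (hab : a ≤ b) (hf : SolvesTangentEq k (Icc a b) f)
    (hg : SolvesTangentEq k (Icc a b) g) (hga : g a ≠ 0)
    (hint : ∫ s in a..b, f s = ∫ s in a..b, g s) (hint₀ : ∫ s in a..b, g s ≠ 0) :
    EqOn f g (Icc a b) := by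
  have hprop := hf.mul_eq_mul hg hga
  have hint_mul : (∫ s in a..b, f s) * g a = f a * ∫ s in a..b, g s := by
    rw [← intervalIntegral.integral_mul_const, ← intervalIntegral.integral_const_mul]
    exact integral_congr fun s hs => hprop s (uIcc_of_le hab ▸ hs)
  have hfa : f a = g a := by
    rw [hint, mul_comm] at hint_mul
    exact (mul_right_cancel₀ hint₀ hint_mul).symm
  intro s hs
  apply mul_right_cancel₀ hga
  rw [hprop s hs, hfa, mul_comm]

theorem conj_comp_sub {L : ℝ} (hf : SolvesTangentEq k (Icc 0 L) f)
    (hk : ∀ s ∈ Icc 0 L, k (L - s) = k s) :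
    SolvesTangentEq k (Icc 0 L) fun s => conj (f (L - s)) := by
  intro s hs
  have hLs : L - s ∈ Icc 0 L := ⟨sub_nonneg.2 hs.2, sub_le_self L hs.1⟩
  refine ((hf (L - s) hLs).comp_const_sub L s).star.congr_deriv ?_
  simp only [star_neg, star_mul', star_def, conj_ofReal, conj_I, hk s hs]
  ring

theorem eqOn_conj_comp_sub {L r : ℝ} (hL : 0 ≤ L) (hf : SolvesTangentEq k (Icc 0 L) f)
    (hk : ∀ s ∈ Icc 0 L, k (L - s) = k s) (hfL : f L ≠ 0) (hint : ∫ s in 0..L, f s = r)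
    (hr : r ≠ 0) : EqOn f (fun s => conj (f (L - s))) (Icc 0 L) := by
  have hint' : ∫ s in 0..L, conj (f (L - s)) = r := by
    rw [intervalIntegral_conj, integral_comp_sub_left, sub_self, sub_zero, hint, conj_ofReal]
  refine hf.eqOn_of_integral_eq hL (hf.conj_comp_sub hk) ?_ (by rw [hint, hint']) ?_
  · simpa only [sub_zero, ne_eq, map_eq_zero] using hfL
  · rw [hint']
    exact_mod_cast hr

end SolvesTangentEq

theorem add_conj_comp_sub_eq {L : ℝ} {z v : ℝ → ℂ}
    (hz : ∀ s ∈ Icc 0 L, HasDerivAt z (v s) s)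
    (hv : ∀ s ∈ Icc 0 L, v s = conj (v (L - s))) :
    ∀ s ∈ Icc 0 L, z s + conj (z (L - s)) = z 0 + conj (z L) := by
  have := constant_of_hasDerivAt_zero (f := fun s => z s + conj (z (L - s))) (a := 0) (b := L)
    fun s hs => by
      have hLs : L - s ∈ Icc 0 L := ⟨sub_nonneg.2 hs.2, sub_le_self L hs.1⟩
      refine ((hz s hs).add ((hz (L - s) hLs).comp_const_sub L s).star).congr_deriv ?_
      rw [hv s hs, star_neg, star_def, add_neg_cancel]
  simpa only [sub_zero, sub_self] using this

theorem halfFold_reflection_symmetry_general (L : ℝ) (hL : 0 < L) (γ : ℝ → R2) (k : ℝ → ℝ)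
    (hunit : ∀ s ∈ Icc (0:ℝ) L, ‖deriv γ s‖ = 1)
    (hcurv : ∀ s ∈ Icc (0:ℝ) L, HasDerivAt (deriv γ) (k s • rot (deriv γ s)) s)
    (hk0 : k 0 = 0)
    (s₀ : ℝ) (Φ : ℝ → ℝ)
    (hodd : ∀ x, Φ (-x) = -Φ x) (hanti : ∀ x, Φ (x + L) = -Φ x)
    (hzero : ∀ x : ℝ, Φ x = 0 ↔ ∃ n : ℤ, x = n * L)
    (hkΦ : ∀ s ∈ Icc (0:ℝ) L, k s = Φ (s - s₀))
    (l : ℝ) (hl : l ≠ 0) (hstart : γ 0 = 0) (hend : γ L = e2 l 0) :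
    ∀ s ∈ Icc (0:ℝ) L, γ (L - s) 0 + γ s 0 = l ∧ γ (L - s) 1 = γ s 1 := by
  have hk := comp_sub_eq_of_odd_of_antiperiodic hk0 hodd hanti (fun x => (hzero x).1) hL.le hkΦ
  have hγ' : ∀ s ∈ Icc 0 L, deriv γ s ≠ 0 := fun s hs =>
    norm_ne_zero_iff.1 (by rw [hunit s hs]; exact one_ne_zero)
  set v : ℝ → ℂ := fun s => toComplex (deriv γ s)
  have hv : SolvesTangentEq k (Icc 0 L) v := fun s hs => by
    simpa only [mul_assoc, map_smul, toComplex_rot, real_smul] using (hcurv s hs).toComplex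
  have hγ : ∀ s ∈ Icc 0 L, HasDerivAt (fun s => toComplex (γ s)) (v s) s := fun s hs =>
    (differentiableAt_of_deriv_ne_zero (hγ' s hs)).hasDerivAt.toComplex
  have hint : ∫ s in 0..L, v s = l := by
    rw [integral_eq_sub_of_hasDerivAt (fun s hs => hγ s (uIcc_of_le hL.le ▸ hs))
      (hv.continuousOn.intervalIntegrable_of_Icc hL.le), hstart, hend, map_zero, sub_zero,
      toComplex_e2]
    simp only [ofReal_zero, zero_mul, add_zero]
  have hvw := hv.eqOn_conj_comp_sub hL.le hk
    (EmbeddingLike.map_ne_zero_iff.2 (hγ' L (right_mem_Icc.2 hL.le))) hint hl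
  intro s hs
  have hsymm := add_conj_comp_sub_eq hγ hvw s hs
  rw [hstart, hend, map_zero, toComplex_e2] at hsymm
  obtain ⟨hre, him⟩ := Complex.ext_iff.1 hsymm
  simp only [add_re, add_im, toComplex_re, toComplex_im, conj_re, conj_im, ofReal_re, ofReal_im,
    ofReal_zero, zero_mul, add_zero, zero_re, zero_im, neg_zero] at hre him
  constructor <;> linarith

/-- Lemma: reflection symmetry of half-fold well-periodic curves. -/
theorem halfFold_reflection_symmetry (L : ℝ) (hL : 0 < L) (γ : ℝ → R2) (k : ℝ → ℝ)
    (hC1 : ContDiffOn ℝ 1 γ (Icc 0 L)) (hunit : ∀ s ∈ Icc (0:ℝ) L, ‖deriv γ s‖ = 1)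
    (hcurv : ∀ s ∈ Icc (0:ℝ) L, HasDerivAt (deriv γ) (k s • rot (deriv γ s)) s)
    (hk0 : k 0 = 0)
    (s₀ : ℝ) (Φ : ℝ → ℝ) (hΦcont : Continuous Φ)
    (hodd : ∀ x, Φ (-x) = -Φ x) (hanti : ∀ x, Φ (x + L) = -Φ x)
    (hzero : ∀ x : ℝ, Φ x = 0 ↔ ∃ n : ℤ, x = n * L)
    (hkΦ : ∀ s ∈ Icc (0:ℝ) L, k s = Φ (s - s₀))
    (l : ℝ) (hl : l ≠ 0) (hstart : γ 0 = 0) (hend : γ L = e2 l 0) :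
    ∀ s ∈ Icc (0:ℝ) L, γ (L - s) 0 + γ s 0 = l ∧ γ (L - s) 1 = γ s 1 :=
  halfFold_reflection_symmetry_general L hL γ k hunit hcurv hk0 s₀ Φ hodd hanti hzero hkΦ l hl
    hstart hend
end
end
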